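/- Fix n ≥ 2. Let 𝓑_n(R) denote the set of bi-Perron algebraic units λ ≤ R that are roots of some monic palindromic polynomial in ℤ[X] of degree at most 2n. Then there is a constant C > 0 (depending only on n) such that |𝓑_n(R)| ≤ C · R^{n(n+1)/2} for all sufficiently large R. -/

import Mathlib

open Polynomial

/-- A bi-Perron algebraic unit: a real algebraic unit `λ > 1` all of whose Galois
conjugates `μ` satisfy `1/λ ≤ |μ| ≤ λ`. -/
def IsBiPerronUnit (l : ℝ) : Prop :=
  1 < l ∧ IsIntegral ℤ l ∧ IsIntegral ℤ l⁻¹ ∧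
    ∀ μ ∈ (minpoly ℚ l).aroots ℂ, 1 / l ≤ ‖μ‖ ∧ ‖μ‖ ≤ l

/-- The set `𝓑_n(R)` of bi-Perron algebraic units `λ ≤ R` which are roots of some monic
palindromic integer polynomial of degree at most `2n`. -/
noncomputable def biPerronUnits (n : ℕ) (R : ℝ) : Set ℝ :=
  {l | IsBiPerronUnit l ∧ l ≤ R ∧
    ∃ p : Polynomial ℤ, p.Monic ∧ p.reverse = p ∧ p.natDegree ≤ 2 * n ∧
      Polynomial.aeval l p = 0}

/-!
Let `q` be the minimal polynomial over `ℤ` of `λ ∈ 𝓑_n(R)`, of degree `d ≤ 2n`. If `q(λ⁻¹) = 0`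
then `q` divides its reverse, so `q` is palindromic (an antipalindromic `q` would vanish at `1`);
otherwise `q` and the minimal polynomial of `λ⁻¹` are distinct irreducible factors of
the same degree of the palindromic polynomial of degree `≤ 2n` vanishing at `λ`, so `d ≤ n`.
Either way `q` is determined by `d` and its top coefficients `q_{d-i}`, `0 ≤ i ≤ n`, and since
all conjugates of `λ` lie in the disc of radius `λ ≤ R`, `|q_{d-i}| ≤ binom(d, i) R^i ≤ 4^n R^i`.
This leaves `O(R^(0 + 1 + ⋯ + n))` possible polynomials `q`, each with at most `2n` roots.
-/

namespace Polynomial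

variable {R : Type*}

theorem coeff_eq_coeff_natDegree_sub_of_reverse_eq [Semiring R] {p : R[X]} (hp : p.reverse = p)
    {j : ℕ} (hj : j ≤ p.natDegree) : p.coeff j = p.coeff (p.natDegree - j) := by
  conv_lhs => rw [← hp]
  rw [coeff_reverse, revAt_le hj]

theorem aeval_reverse_eq_zero_iff [CommRing R] {K : Type*} [Field K] [Algebra R K] (f : R[X])
    {x : K} (hx : x ≠ 0) : aeval x f.reverse = 0 ↔ aeval x⁻¹ f = 0 := by
  let := invertibleOfNonzero (inv_ne_zero hx)
  simpa only [aeval_def, invOf_eq_inv, inv_inv] using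
    eval₂_reverse_eq_zero_iff (algebraMap R K) x⁻¹ f

theorem eval_one_reverse [CommRing R] (f : R[X]) : f.reverse.eval 1 = f.eval 1 := by
  simpa using @eval₂_reverse_mul_pow _ _ _ _ (RingHom.id R) 1 invertibleOne f

theorem reverse_eq_self_or_neg_of_dvd {q : ℤ[X]} (hq : q.Monic) (hdvd : q ∣ q.reverse) :
    q.reverse = q ∨ q.reverse = -q := by
  obtain ⟨t, ht⟩ := hdvd
  have ht0 : t ≠ 0 := by
    rintro rfl
    exact hq.ne_zero (reverse_eq_zero.mp (by simpa using ht))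
  have htdeg : t.natDegree = 0 := by
    have := reverse_natDegree_le q
    rw [ht, natDegree_mul hq.ne_zero ht0] at this
    omega
  obtain ⟨r, rfl⟩ := natDegree_eq_zero.mp htdeg
  have hr : IsUnit r := by
    have h0 := congrArg (coeff · 0) ht
    simp only [coeff_zero_reverse, hq.leadingCoeff, coeff_mul_C] at h0
    exact IsUnit.of_mul_eq_one_right _ h0.symm
  rcases Int.isUnit_iff.mp hr with rfl | rfl
  · left; simpa using ht
  · right; simpa using ht

/-- For `i > natDegree q` the truncated subtraction makes the entry the constant coefficient. -/
def topCoeffs [Semiring R] (n : ℕ) (q : R[X]) : Fin (n + 1) → R :=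
  fun i => q.coeff (q.natDegree - i)

theorem injOn_natDegree_topCoeffs [Semiring R] (n : ℕ) :
    Set.InjOn (fun q : R[X] => (q.natDegree, topCoeffs n q))
      {q | q.natDegree ≤ 2 * n ∧ (q.reverse = q ∨ q.natDegree ≤ n)} := by
  rintro p ⟨hp2n, hp⟩ q ⟨-, hq⟩ hpq
  obtain ⟨hdeg, htop⟩ := Prod.mk.inj hpq
  have htop' (i : ℕ) (hi : i ≤ n) : p.coeff (p.natDegree - i) = q.coeff (p.natDegree - i) := by
    simpa [topCoeffs, hdeg] using congrFun htop ⟨i, by omega⟩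
  ext j
  rcases lt_or_ge p.natDegree j with hj | hj
  · rw [coeff_eq_zero_of_natDegree_lt hj, coeff_eq_zero_of_natDegree_lt (hdeg ▸ hj)]
  by_cases hjn : p.natDegree - j ≤ n
  · simpa [Nat.sub_sub_self hj] using htop' _ hjn
  · have hprev := hp.resolve_right (by omega)
    have hqrev := hq.resolve_right (by omega)
    rw [coeff_eq_coeff_natDegree_sub_of_reverse_eq hprev hj,
      coeff_eq_coeff_natDegree_sub_of_reverse_eq hqrev (hdeg ▸ hj), ← hdeg]
    exact htop' j (by omega)

theorem abs_coeff_le_of_forall_aroots_norm_le {p : ℤ[X]} (hp : p.Monic) {B : ℝ}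
    (h : ∀ z ∈ p.aroots ℂ, ‖z‖ ≤ B) (j : ℕ) :
    |(p.coeff j : ℝ)| ≤ B ^ (p.natDegree - j) * p.natDegree.choose j := by
  simpa using coeff_le_of_roots_le j hp (IsAlgClosed.splits _) h

end Polynomial

theorem eq_one_of_isRoot_one_minpoly {A : Type*} [CommRing A] [IsDomain A] {x : A}
    (hx : IsIntegral ℤ x) (h : (minpoly ℤ x).IsRoot 1) : x = 1 := by
  have hdvd : minpoly ℤ x ∣ X - C 1 :=
    (irreducible_X_sub_C 1).dvd_symm (minpoly.irreducible hx) (dvd_iff_isRoot.mpr h)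
  simpa [sub_eq_zero] using aeval_eq_zero_of_dvd_aeval_eq_zero hdvd (minpoly.aeval ℤ x)

section minpoly

variable {K : Type*} [Field K] [CharZero K]

theorem minpoly_reverse_eq_self_of_aeval_inv {x : K} (hx : IsIntegral ℤ x) (hx0 : x ≠ 0)
    (hx1 : x ≠ 1) (h : aeval x⁻¹ (minpoly ℤ x) = 0) : (minpoly ℤ x).reverse = minpoly ℤ x := by
  have hdvd : minpoly ℤ x ∣ (minpoly ℤ x).reverse :=
    minpoly.isIntegrallyClosed_dvd hx ((aeval_reverse_eq_zero_iff _ hx0).mpr h)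
  refine (reverse_eq_self_or_neg_of_dvd (minpoly.monic hx) hdvd).resolve_right fun hneg => hx1 ?_
  refine eq_one_of_isRoot_one_minpoly hx ?_
  have := eval_one_reverse (minpoly ℤ x)
  rw [hneg, eval_neg] at this
  exact neg_eq_self.mp this

theorem minpoly_reverse_eq_self_or_two_mul_natDegree_le {x : K} (hx : IsIntegral ℤ x)
    (hinv : IsIntegral ℤ x⁻¹) (hx0 : x ≠ 0) (hx1 : x ≠ 1) {p : ℤ[X]} (hp0 : p ≠ 0)
    (hrev : p.reverse = p) (hp : aeval x p = 0) :
    (minpoly ℤ x).reverse = minpoly ℤ x ∨ 2 * (minpoly ℤ x).natDegree ≤ p.natDegree := by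
  by_cases h : aeval x⁻¹ (minpoly ℤ x) = 0
  · exact Or.inl (minpoly_reverse_eq_self_of_aeval_inv hx hx0 hx1 h)
  right
  have hrev0 : (minpoly ℤ x⁻¹).reverse ≠ 0 := reverse_eq_zero.not.mpr (minpoly.ne_zero hinv)
  have hdeg : (minpoly ℤ x).natDegree ≤ (minpoly ℤ x⁻¹).natDegree := by
    refine (natDegree_le_of_dvd (minpoly.isIntegrallyClosed_dvd hx ?_) hrev0).trans
      (reverse_natDegree_le _)
    rw [aeval_reverse_eq_zero_iff _ hx0]
    exact minpoly.aeval ℤ x⁻¹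
  have hcop : IsRelPrime (minpoly ℤ x⁻¹) (minpoly ℤ x) := by
    refine (minpoly.irreducible hinv).isRelPrime_iff_not_dvd.mpr fun hdvd => h ?_
    exact aeval_eq_zero_of_dvd_aeval_eq_zero hdvd (minpoly.aeval ℤ x⁻¹)
  have hinvp : aeval x⁻¹ p = 0 := by rw [← aeval_reverse_eq_zero_iff _ hx0, hrev, hp]
  have hmul : minpoly ℤ x⁻¹ * minpoly ℤ x ∣ p := hcop.mul_dvd
    (minpoly.isIntegrallyClosed_dvd hinv hinvp) (minpoly.isIntegrallyClosed_dvd hx hp)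
  have := natDegree_le_of_dvd hmul hp0
  rw [(minpoly.monic hinv).natDegree_mul (minpoly.monic hx)] at this
  omega

end minpoly

theorem Int.card_Icc_neg_floor_le {B : ℝ} (hB : 0 ≤ B) :
    ((Finset.Icc (-⌊B⌋) ⌊B⌋).card : ℝ) ≤ 2 * B + 1 := by
  have h0 : 0 ≤ ⌊B⌋ := Int.floor_nonneg.mpr hB
  rw [Int.card_Icc, show ⌊B⌋ + 1 - -⌊B⌋ = 2 * ⌊B⌋ + 1 by ring,
    ← Int.cast_natCast, Int.toNat_of_nonneg (by omega)]
  push_cast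
  linarith [Int.floor_le B]

section biPerronUnits

variable {n : ℕ} {R l : ℝ}

theorem minpoly_mem_of_mem_biPerronUnits (hl : l ∈ biPerronUnits n R) :
    minpoly ℤ l ∈ {q : ℤ[X] | q.natDegree ≤ 2 * n ∧ (q.reverse = q ∨ q.natDegree ≤ n)} := by
  obtain ⟨⟨hl1, hint, hinv, -⟩, -, p, hpm, hprev, hpdeg, hp⟩ := hl
  have hdeg := natDegree_le_of_dvd (minpoly.isIntegrallyClosed_dvd hint hp) hpm.ne_zero
  refine ⟨by omega, ?_⟩
  rcases minpoly_reverse_eq_self_or_two_mul_natDegree_le hint hinv (by positivity) hl1.ne'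
    hpm.ne_zero hprev hp with h | h
  · exact Or.inl h
  · exact Or.inr (by omega)

theorem abs_topCoeffs_minpoly_le (hl : l ∈ biPerronUnits n R) (i : Fin (n + 1)) :
    |((topCoeffs n (minpoly ℤ l) i : ℤ) : ℝ)| ≤ 4 ^ n * R ^ (i : ℕ) := by
  have hdeg := (minpoly_mem_of_mem_biPerronUnits hl).1
  obtain ⟨⟨hl1, hint, -, hroots⟩, hlR, -⟩ := hl
  set d := (minpoly ℤ l).natDegree
  have hconj : ∀ z ∈ (minpoly ℤ l).aroots ℂ, ‖z‖ ≤ l := by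
    rw [← aroots_map ℂ ℚ, ← minpoly.isIntegrallyClosed_eq_field_fractions' ℚ hint]
    exact fun z hz => (hroots z hz).2
  have hpow : l ^ (d - (d - i)) ≤ R ^ (i : ℕ) :=
    (pow_le_pow_left₀ (by positivity) hlR _).trans
      (pow_le_pow_right₀ (by linarith) (by omega))
  have hchoose : (d.choose (d - i) : ℝ) ≤ 4 ^ n := by
    have : d.choose (d - i) ≤ 4 ^ n := calc
      d.choose (d - i) ≤ 2 ^ d := Nat.choose_le_two_pow _ _
      _ ≤ 2 ^ (2 * n) := Nat.pow_le_pow_right two_pos hdeg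
      _ = 4 ^ n := by rw [pow_mul]; norm_num
    exact_mod_cast this
  calc |((topCoeffs n (minpoly ℤ l) i : ℤ) : ℝ)|
      ≤ l ^ (d - (d - i)) * d.choose (d - i) :=
        abs_coeff_le_of_forall_aroots_norm_le (minpoly.monic hint) hconj _
    _ ≤ R ^ (i : ℕ) * 4 ^ n :=
        mul_le_mul hpow hchoose (by positivity) (pow_nonneg (by linarith) _)
    _ = 4 ^ n * R ^ (i : ℕ) := mul_comm _ _

noncomputable def coeffBox (n : ℕ) (R : ℝ) : Finset (ℕ × (Fin (n + 1) → ℤ)) :=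
  Finset.range (2 * n + 1) ×ˢ
    Fintype.piFinset fun i : Fin (n + 1) =>
      Finset.Icc (-⌊4 ^ n * R ^ (i : ℕ)⌋) ⌊4 ^ n * R ^ (i : ℕ)⌋

theorem natDegree_topCoeffs_minpoly_mem_coeffBox (hl : l ∈ biPerronUnits n R) :
    ((minpoly ℤ l).natDegree, topCoeffs n (minpoly ℤ l)) ∈ coeffBox n R := by
  have hdeg := (minpoly_mem_of_mem_biPerronUnits hl).1
  simp only [coeffBox, Finset.mem_product, Finset.mem_range, Fintype.mem_piFinset,
    Finset.mem_Icc]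
  refine ⟨by omega, fun i => ?_⟩
  have := abs_le.mp (abs_topCoeffs_minpoly_le hl i)
  rw [neg_le, Int.le_floor, Int.le_floor]
  push_cast
  constructor <;> linarith

theorem card_coeffBox_le (n : ℕ) {R : ℝ} (hR : 1 ≤ R) :
    ((coeffBox n R).card : ℝ) ≤ (2 * n + 1) * (3 * 4 ^ n) ^ (n + 1) * R ^ (n * (n + 1) / 2) := by
  have hsum : ∑ i : Fin (n + 1), (i : ℕ) = n * (n + 1) / 2 := by
    rw [Fin.sum_univ_eq_sum_range (fun i => i), Finset.sum_range_id, Nat.add_sub_cancel,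
      mul_comm]
  have hfactor (i : Fin (n + 1)) :
      ((Finset.Icc (-⌊4 ^ n * R ^ (i : ℕ)⌋) ⌊4 ^ n * R ^ (i : ℕ)⌋).card : ℝ) ≤
        3 * 4 ^ n * R ^ (i : ℕ) := by
    have h1 : (1 : ℝ) ≤ 4 ^ n * R ^ (i : ℕ) := one_le_mul_of_one_le_of_one_le
      (one_le_pow₀ (by norm_num)) (one_le_pow₀ hR)
    linarith [Int.card_Icc_neg_floor_le (B := 4 ^ n * R ^ (i : ℕ)) (by linarith)]
  rw [coeffBox, Finset.card_product, Finset.card_range, Fintype.card_piFinset]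
  push_cast
  calc _ ≤ (2 * n + 1) * ∏ i : Fin (n + 1), 3 * 4 ^ n * R ^ (i : ℕ) := by
        gcongr with i
        exact hfactor i
    _ = _ := by
        rw [Finset.prod_mul_distrib, Finset.prod_const, Finset.card_univ, Fintype.card_fin,
          Finset.prod_pow_eq_pow_sum, hsum, mul_assoc]

theorem ncard_biPerronUnits_le (n : ℕ) (R : ℝ) :
    (biPerronUnits n R).ncard ≤ 2 * n * (coeffBox n R).card := by
  set Q := minpoly ℤ '' biPerronUnits n R
  have hmaps : ∀ q ∈ Q, (q.natDegree, topCoeffs n q) ∈ coeffBox n R := by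
    rintro _ ⟨l, hl, rfl⟩
    exact natDegree_topCoeffs_minpoly_mem_coeffBox hl
  have hmem : Q ⊆ {q | q.natDegree ≤ 2 * n ∧ (q.reverse = q ∨ q.natDegree ≤ n)} := by
    rintro _ ⟨l, hl, rfl⟩
    exact minpoly_mem_of_mem_biPerronUnits hl
  have hinj : Set.InjOn (fun q : ℤ[X] => (q.natDegree, topCoeffs n q)) Q :=
    (injOn_natDegree_topCoeffs n).mono hmem
  have hQ : Q.Finite := Set.Finite.of_finite_image
    ((coeffBox n R).finite_toSet.subset (Set.image_subset_iff.mpr hmaps)) hinj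
  have hsub : biPerronUnits n R ⊆ ⋃ q ∈ hQ.toFinset, q.rootSet ℝ := by
    intro l hl
    simp only [Set.mem_iUnion, Set.Finite.mem_toFinset]
    exact ⟨minpoly ℤ l, ⟨l, hl, rfl⟩,
      mem_rootSet.mpr ⟨minpoly.ne_zero hl.1.2.1, minpoly.aeval ℤ l⟩⟩
  calc (biPerronUnits n R).ncard
      ≤ (⋃ q ∈ hQ.toFinset, q.rootSet ℝ).ncard :=
        Set.ncard_le_ncard hsub (hQ.toFinset.finite_toSet.biUnion fun q _ => rootSet_finite q ℝ)
    _ ≤ ∑ q ∈ hQ.toFinset, (q.rootSet ℝ).ncard := Finset.set_ncard_biUnion_le _ _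
    _ ≤ hQ.toFinset.card • (2 * n) := by
        refine Finset.sum_le_card_nsmul _ _ _ fun q hq => ?_
        exact (ncard_rootSet_le q ℝ).trans (hmem (hQ.mem_toFinset.mp hq)).1
    _ ≤ 2 * n * (coeffBox n R).card := by
        rw [smul_eq_mul, mul_comm, ← Set.ncard_eq_toFinset_card Q hQ]
        gcongr
        simpa using Set.ncard_le_ncard_of_injOn _ hmaps hinj

end biPerronUnits

theorem biPerronUnits_card_le_general (n : ℕ) :
    ∃ C : ℝ, 0 < C ∧ ∀ᶠ R : ℝ in Filter.atTop,
      ((biPerronUnits n R).ncard : ℝ) ≤ C * R ^ (n * (n + 1) / 2) := by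
  refine ⟨(2 * n + 1) ^ 2 * (3 * 4 ^ n) ^ (n + 1), by positivity, ?_⟩
  filter_upwards [Filter.eventually_ge_atTop 1] with R hR
  calc ((biPerronUnits n R).ncard : ℝ) ≤ 2 * n * (coeffBox n R).card := by
        exact_mod_cast ncard_biPerronUnits_le n R
    _ ≤ (2 * n + 1) * ((2 * n + 1) * (3 * 4 ^ n) ^ (n + 1) * R ^ (n * (n + 1) / 2)) := by
        gcongr
        · linarith
        · exact card_coeffBox_le n hR
    _ = _ := by ring

/-- `|𝓑_n(R)| ≤ C · R^(n(n+1)/2)` for all sufficiently large `R`. -/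
theorem biPerronUnits_card_le (n : ℕ) (hn : 2 ≤ n) :
    ∃ C : ℝ, 0 < C ∧ ∀ᶠ R : ℝ in Filter.atTop,
      ((biPerronUnits n R).ncard : ℝ) ≤ C * R ^ (n * (n + 1) / 2) :=
  biPerronUnits_card_le_general n
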